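/- Correctness of the reduction showing fallback voting resistant to destructive control by adding candidates: let (C,V) be the fallback voting election obtained by Construction 1 from a Hitting Set instance (B,S,k). Then S has a hitting set of size at most k if and only if there exists a set D' ⊆ B with ||D'|| ≤ k such that c is not a unique FV winner of the restricted election ({c,d,w} ∪ D', V). -/

import Mathlib

/-!
Fallback voting (Brams and Sanver).  A vote is represented by the list of the
candidates the voter approves of, in order of preference (most preferred
first); all candidates not occurring in the list are disapproved.  The voter
collection is a multiset of such votes.
-/

namespace FV

variable {α : Type} [DecidableEq α]

/-- The level-`i` score of candidate `c` in the election with votes `V`: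
the number of voters who approve of `c` and rank `c` among their top `i`
approved candidates. -/
def levelScore (V : Multiset (List α)) (i : ℕ) (c : α) : ℕ :=
  (V.filter (fun v => c ∈ v.take i)).card

/-- The approval score of candidate `c`: the number of voters approving of `c`. -/
def apprScore (V : Multiset (List α)) (c : α) : ℕ :=
  (V.filter (fun v => c ∈ v)).card

/-- Restriction of the votes to the candidate set `C`: each voter's approval
set and ranking are restricted to `C`. -/
def restrict (C : Finset α) (V : Multiset (List α)) : Multiset (List α) :=
  V.map (fun v => v.filter (fun x => decide (x ∈ C)))

instance instDecMaj (C : Finset α) (V : Multiset (List α)) :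
    DecidablePred (fun i =>
      i ∈ Finset.Icc 1 C.card ∧ ∃ c ∈ C, 2 * levelScore V i c > Multiset.card V) :=
  fun _ => inferInstance

/-- The set of fallback-voting winners of the election `(C,V)`:
if some level `i` with `1 ≤ i ≤ ‖C‖` exists at which some candidate of `C`
has a strict majority (level-`i` score exceeding `‖V‖/2`), then the winners
are the candidates with the largest level-`i₀` score, where `i₀` is the
smallest such level; otherwise the winners are the candidates with the largest
approval score. -/
def winners (C : Finset α) (V : Multiset (List α)) : Finset α :=
  if h : ∃ i, i ∈ Finset.Icc 1 C.card ∧ ∃ c ∈ C, 2 * levelScore V i c > Multiset.card V then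
    C.filter (fun c => ∀ d ∈ C, levelScore V (Nat.find h) d ≤ levelScore V (Nat.find h) c)
  else
    C.filter (fun c => ∀ d ∈ C, apprScore V d ≤ apprScore V c)

/-- The FV winners of the election `(C,V)` restricted to the candidate set `C`. -/
def fwinners (C : Finset α) (V : Multiset (List α)) : Finset α :=
  winners C (restrict C V)

end FV

/-! ### Construction 1 from a Hitting Set instance `(B, S, k)` -/

/-- Candidates of Construction 1: the elements of `B = {b_0, …, b_{m-1}}`
together with the three candidates `c`, `d`, and `w`. -/
inductive CandA (m : ℕ) where
  | b (j : Fin m)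
  | c
  | d
  | w
deriving DecidableEq

/-- The elements of a subset `T ⊆ B`, ranked according to the fixed linear
order on `B`. -/
def blistA {m : ℕ} (T : Finset (Fin m)) : List (CandA m) :=
  (T.sort (· ≤ ·)).map CandA.b

/-- The candidate set `C = B ∪ {c, d, w}` of Construction 1. -/
def CA (m : ℕ) : Finset (CandA m) :=
  (Finset.univ : Finset (Fin m)).image CandA.b ∪ {CandA.c, CandA.d, CandA.w}

/-- The voter collection of Construction 1:
`2m+1` voters `c | B∪{d,w}`; `2n+2k(n−1)+3` voters `c w | B∪{d}`;
`2n(k+1)+5` voters `w c | B∪{d}`; for each `i`, `2(k+1)` voters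
`d S_i c | (B−S_i)∪{w}`; for each `j`, two voters `d b_j w | (B−{b_j})∪{c}`;
and `2(k+1)` voters `d w c | B`. -/
def VA (m n k : ℕ) (S : Fin n → Finset (Fin m)) : Multiset (List (CandA m)) :=
  Multiset.replicate (2*m+1) [CandA.c] +
  Multiset.replicate (2*n + 2*k*(n-1) + 3) [CandA.c, CandA.w] +
  Multiset.replicate (2*n*(k+1) + 5) [CandA.w, CandA.c] +
  (∑ i : Fin n, Multiset.replicate (2*(k+1)) ([CandA.d] ++ blistA (S i) ++ [CandA.c])) +
  (∑ j : Fin m, Multiset.replicate 2 [CandA.d, CandA.b j, CandA.w]) +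
  Multiset.replicate (2*(k+1)) [CandA.d, CandA.w, CandA.c]

/-!
Whatever spoilers `D' ⊆ B` are added, nobody has a strict majority at level 1, while `c` has
one at level 2; so the FV winners are the candidates with the largest level-2 score. The votes
`d S_i c` give `c` level-2 points exactly for the sets `S_i` that `D'` misses. If `D'` hits every
`S_i`, then `w` beats `c` at level 2 by `2(k - ‖D'‖) + 1`, because each `b_j ∉ D'` lets
`d b_j w` count for `w`. If `D'` misses some `S_i`, the `2(k+1)` voters `d S_i c` put `c` strictly
ahead of every other candidate.
-/

theorem List.mem_take_one_append_singleton_iff {α : Type*} {a : α} {l : List α} (h : a ∉ l) :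
    a ∈ (l ++ [a]).take 1 ↔ l = [] := by
  cases l with
  | nil => simp
  | cons b l => simpa using fun hab : a = b => h (hab ▸ List.mem_cons_self)

theorem List.notMem_take_of_notMem {α : Type*} {a : α} {l : List α} (h : a ∉ l) (i : ℕ) :
    a ∉ l.take i :=
  mt List.mem_of_mem_take h

namespace FV
variable {α : Type} [DecidableEq α]

@[simp] theorem levelScore_add (V W : Multiset (List α)) (i : ℕ) (x : α) :
    levelScore (V + W) i x = levelScore V i x + levelScore W i x := by
  simp [levelScore, Multiset.filter_add]

@[simp] theorem levelScore_replicate (a : ℕ) (v : List α) (i : ℕ) (x : α) :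
    levelScore (Multiset.replicate a v) i x = if x ∈ v.take i then a else 0 := by
  rw [levelScore, ← Multiset.countP_eq_card_filter, ← Multiset.coe_replicate,
    Multiset.coe_countP, List.countP_replicate]
  simp

@[simp] theorem levelScore_sum {ι : Type*} (s : Finset ι) (V : ι → Multiset (List α)) (i : ℕ)
    (x : α) : levelScore (∑ j ∈ s, V j) i x = ∑ j ∈ s, levelScore (V j) i x := by
  simp only [levelScore, ← Multiset.countP_eq_card_filter, ← Multiset.coe_countPAddMonoidHom,
    map_sum]

@[simp] theorem restrict_add (C : Finset α) (V W : Multiset (List α)) :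
    restrict C (V + W) = restrict C V + restrict C W :=
  Multiset.map_add _ _ _

@[simp] theorem restrict_replicate (C : Finset α) (a : ℕ) (v : List α) :
    restrict C (Multiset.replicate a v) = Multiset.replicate a (v.filter (· ∈ C)) :=
  Multiset.map_replicate _ _ _

@[simp] theorem restrict_sum {ι : Type*} (C : Finset α) (s : Finset ι)
    (V : ι → Multiset (List α)) : restrict C (∑ j ∈ s, V j) = ∑ j ∈ s, restrict C (V j) :=
  map_sum (Multiset.mapAddMonoidHom _) _ _

@[simp] theorem card_restrict (C : Finset α) (V : Multiset (List α)) :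
    Multiset.card (restrict C V) = Multiset.card V :=
  Multiset.card_map _ _

def IsFirstMajorityLevel (C : Finset α) (V : Multiset (List α)) (i : ℕ) : Prop :=
  i ∈ Finset.Icc 1 C.card ∧ (∃ x ∈ C, Multiset.card V < 2 * levelScore V i x) ∧
    ∀ j ∈ Finset.Ico 1 i, ∀ x ∈ C, 2 * levelScore V j x ≤ Multiset.card V

variable {C : Finset α} {V : Multiset (List α)} {i : ℕ}

theorem winners_eq_filter_of_isFirstMajorityLevel (hi : IsFirstMajorityLevel C V i) :
    winners C V = C.filter (fun x => ∀ y ∈ C, levelScore V i y ≤ levelScore V i x) := by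
  obtain ⟨hiC, hmaj, hbelow⟩ := hi
  have hex : ∃ j, j ∈ Finset.Icc 1 C.card ∧ ∃ x ∈ C, 2 * levelScore V j x > Multiset.card V :=
    ⟨i, hiC, hmaj⟩
  have hfind : Nat.find hex = i := by
    refine (Nat.find_eq_iff hex).2 ⟨⟨hiC, hmaj⟩, fun j hji ⟨hjC, x, hx, hgt⟩ => ?_⟩
    have := hbelow j (Finset.mem_Ico.2 ⟨(Finset.mem_Icc.1 hjC).1, hji⟩) x hx
    omega
  rw [winners, dif_pos hex, hfind]

theorem winners_eq_singleton_of_isFirstMajorityLevel (hi : IsFirstMajorityLevel C V i) {x : α}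
    (hx : x ∈ C) (hlt : ∀ y ∈ C, y ≠ x → levelScore V i y < levelScore V i x) :
    winners C V = {x} := by
  rw [winners_eq_filter_of_isFirstMajorityLevel hi]
  ext y
  simp only [Finset.mem_filter, Finset.mem_singleton]
  constructor
  · rintro ⟨hy, hmax⟩
    by_contra hyx
    exact (hmax x hx).not_gt (hlt y hy hyx)
  · rintro rfl
    refine ⟨hx, fun z hz => ?_⟩
    rcases eq_or_ne z y with rfl | hzy
    · exact le_rfl
    · exact (hlt z hz hzy).le

theorem notMem_winners_of_isFirstMajorityLevel (hi : IsFirstMajorityLevel C V i) {x y : α}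
    (hy : y ∈ C) (hlt : levelScore V i x < levelScore V i y) : x ∉ winners C V := by
  rw [winners_eq_filter_of_isFirstMajorityLevel hi, Finset.mem_filter]
  exact fun ⟨_, hmax⟩ => (hmax y hy).not_gt hlt

end FV

namespace CandA
open FV Finset
variable {m n k : ℕ} {S : Fin n → Finset (Fin m)} {D' : Finset (Fin m)}

def candsWith (D' : Finset (Fin m)) : Finset (CandA m) :=
  {c, d, w} ∪ D'.image b

@[simp] theorem c_mem_candsWith : c ∈ candsWith D' := by simp [candsWith]
@[simp] theorem d_mem_candsWith : d ∈ candsWith D' := by simp [candsWith]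
@[simp] theorem w_mem_candsWith : w ∈ candsWith D' := by simp [candsWith]
@[simp] theorem b_mem_candsWith {j : Fin m} : b j ∈ candsWith D' ↔ j ∈ D' := by simp [candsWith]

@[simp] theorem mem_blistA {T : Finset (Fin m)} {x : CandA m} :
    x ∈ blistA T ↔ ∃ j ∈ T, b j = x := by
  simp [blistA]

theorem card_VA : Multiset.card (VA m n k S) =
    (2*m+1) + (2*n+2*k*(n-1)+3) + (2*n*(k+1)+5) + 2*n*(k+1) + 2*m + 2*(k+1) := by
  simp [VA, Multiset.card_sum]
  ring

theorem two_mul_levelScore_one_le (hn : 1 < n) (x : CandA m) :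
    2 * levelScore (restrict (candsWith D') (VA m n k S)) 1 x ≤ Multiset.card (VA m n k S) := by
  have : k ≤ k*(n-1) := Nat.le_mul_of_pos_right k (by omega)
  have : k*(n-1) ≤ k*n := Nat.mul_le_mul_left k (Nat.sub_le n 1)
  rw [card_VA]
  cases x <;> simp [VA, -Multiset.replicate_succ, List.filter_cons] <;> linarith

theorem levelScore_two_c :
    levelScore (restrict (candsWith D') (VA m n k S)) 2 c =
      (2*m+1) + (2*n+2*k*(n-1)+3) + (2*n*(k+1)+5) + 2*(k+1) * #{i | Disjoint D' (S i)} := by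
  simp [VA, -Multiset.replicate_succ, List.filter_cons, List.mem_take_one_append_singleton_iff,
    sum_ite, ← disjoint_right, apply_ite (List.take 1), mem_ite]
  ring

theorem levelScore_two_w :
    levelScore (restrict (candsWith D') (VA m n k S)) 2 w =
      (2*n+2*k*(n-1)+3) + (2*n*(k+1)+5) + 2*(m - #D') + 2*(k+1) := by
  simp [VA, -Multiset.replicate_succ, List.filter_cons, sum_ite, apply_ite (List.take 1), mem_ite,
    List.notMem_take_of_notMem]
  rw [filter_notMem_eq_sdiff, card_univ_sdiff, Fintype.card_fin, mul_comm]

theorem levelScore_two_d :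
    levelScore (restrict (candsWith D') (VA m n k S)) 2 d = 2*n*(k+1) + 2*m + 2*(k+1) := by
  simp [VA, -Multiset.replicate_succ]
  ring

theorem levelScore_two_b_le (j : Fin m) :
    levelScore (restrict (candsWith D') (VA m n k S)) 2 (b j) ≤ 2*n*(k+1) + 2 := by
  simp [VA, -Multiset.replicate_succ, List.filter_cons, sum_ite, apply_ite (List.take 1), mem_ite]
  calc _ ≤ n * (2*(k+1)) + 1 * 2 := by
        gcongr
        · exact (card_filter_le _ _).trans (by simp)
        · exact card_le_one.2 (by simp; grind)
    _ = 2*n*(k+1) + 2 := by ring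

theorem isFirstMajorityLevel_two (hn : 1 < n) :
    IsFirstMajorityLevel (candsWith D') (restrict (candsWith D') (VA m n k S)) 2 := by
  refine ⟨mem_Icc.2 ⟨one_le_two, ?_⟩, ⟨c, c_mem_candsWith, ?_⟩, ?_⟩
  · have : ({c, d} : Finset (CandA m)) ⊆ candsWith D' := by simp [insert_subset_iff]
    simpa using card_le_card this
  · have : 2*k ≤ 2*k*(n-1) := Nat.le_mul_of_pos_right _ (by omega)
    rw [card_restrict, card_VA, levelScore_two_c]
    omega
  · intro j hj x _
    obtain rfl : j = 1 := by simp at hj; omega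
    rw [card_restrict]
    exact two_mul_levelScore_one_le hn x

theorem c_notMem_fwinners_of_forall_not_disjoint (hn : 1 < n) (hD : #D' ≤ k)
    (hhit : ∀ i, ¬Disjoint D' (S i)) : c ∉ fwinners (candsWith D') (VA m n k S) := by
  refine notMem_winners_of_isFirstMajorityLevel (isFirstMajorityLevel_two hn) w_mem_candsWith ?_
  have hm : #D' ≤ m := by simpa using card_le_univ D'
  rw [levelScore_two_c, levelScore_two_w, filter_false_of_mem fun i _ => hhit i, card_empty]
  omega

theorem fwinners_eq_singleton_c_of_disjoint (hn : 1 < n) {i : Fin n} (hi : Disjoint D' (S i)) :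
    fwinners (candsWith D') (VA m n k S) = {c} := by
  refine winners_eq_singleton_of_isFirstMajorityLevel (isFirstMajorityLevel_two hn)
    c_mem_candsWith fun y _ hyc => ?_
  have hmiss : 2*(k+1) ≤ 2*(k+1) * #{i | Disjoint D' (S i)} :=
    Nat.le_mul_of_pos_right _ (card_pos.2 ⟨i, by simpa using hi⟩)
  rw [levelScore_two_c]
  cases y with
  | b j => exact (levelScore_two_b_le j).trans_lt (by omega)
  | c => exact absurd rfl hyc
  | d => rw [levelScore_two_d]; omega
  | w => rw [levelScore_two_w]; omega

end CandA

theorem fv_construction1_destructive_adding_candidates_general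
    (m n k : ℕ) (S : Fin n → Finset (Fin m))
    (hn : 1 < n) :
    (∃ B' : Finset (Fin m), B'.card ≤ k ∧ ∀ i, (B' ∩ S i).Nonempty) ↔
    (∃ D' : Finset (Fin m), D'.card ≤ k ∧
      FV.fwinners ({CandA.c, CandA.d, CandA.w} ∪ D'.image CandA.b) (VA m n k S)
        ≠ {CandA.c}) := by
  simp only [← Finset.not_disjoint_iff_nonempty_inter]
  constructor
  · rintro ⟨B', hB, hhit⟩
    exact ⟨B', hB, fun h => CandA.c_notMem_fwinners_of_forall_not_disjoint hn hB hhit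
      (h ▸ Finset.mem_singleton_self _)⟩
  · rintro ⟨D', hD, hne⟩
    exact ⟨D', hD, fun i hi => hne (CandA.fwinners_eq_singleton_c_of_disjoint hn hi)⟩

/-- Correctness of the reduction showing fallback voting resistant to
destructive control by adding candidates: for the election `(C,V)` of
Construction 1 from a Hitting Set instance `(B,S,k)` (with `n > 1`,
`0 < k < m`, and all `S_i` nonempty), `S` has a hitting set of size at most
`k` if and only if there is a set `D' ⊆ B` of spoiler candidates with
`‖D'‖ ≤ k` such that `c` is not a unique FV winner of the restricted election
`({c,d,w} ∪ D', V)`. -/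
theorem fv_construction1_destructive_adding_candidates
    (m n k : ℕ) (S : Fin n → Finset (Fin m))
    (hn : 1 < n) (hk : 0 < k) (hkm : k < m) (hS : ∀ i, (S i).Nonempty) :
    (∃ B' : Finset (Fin m), B'.card ≤ k ∧ ∀ i, (B' ∩ S i).Nonempty) ↔
    (∃ D' : Finset (Fin m), D'.card ≤ k ∧
      FV.fwinners ({CandA.c, CandA.d, CandA.w} ∪ D'.image CandA.b) (VA m n k S)
        ≠ {CandA.c}) :=
  fv_construction1_destructive_adding_candidates_general m n k S hn
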